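/- arXiv:2208.06506 — 12 statements merged into one kernel-verified Lean document; each statement's English description precedes it below -/
import Mathlib

section
/- (Theorem: reduction from Vertex Cover to MinECC, Theorem 8 of the paper.) Let G = (V, E) be a finite simple graph. Define an edge-colored hypergraph H whose vertex set is E, whose color set is V, and which has, for each u ∈ V, one hyperedge e_u = { e ∈ E : u ∈ e } of color u and unit weight. Then the minimum over all node colorings Y : E → V of the number of hyperedges e_u at which Y makes a mistake (i.e., for which some e ∈ E with u ∈ e has Y(e) ≠ u) equals the minimum size of a vertex cover of G. Moreover, every hyperedge e_u has exactly deg_G(u) elements, so the rank of H equals the maximum degree of G. -/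
/-!
An edge `s(v, w)` receives a single color, so a coloring makes a mistake at `e_v` or at `e_w`:
the colors of the miscolored hyperedges always form a vertex cover. Conversely, coloring each
edge by an endpoint outside a given vertex cover `S`, whenever it has one, makes mistakes only at
colors in `S`. So every coloring is matched by a cover of no larger size and vice versa.
-/

namespace SimpleGraph

variable {V : Type*} {G : SimpleGraph V}

theorem isVertexCover_coe_iff_forall_mem_edgeFinset [Fintype G.edgeSet] {S : Finset V} :
    G.IsVertexCover S ↔ ∀ e ∈ G.edgeFinset, ∃ u ∈ S, u ∈ e := by
  refine ⟨fun hS e he => ?_, fun hS v w hvw => ?_⟩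
  · induction e with
    | h v w =>
      rcases hS (G.mem_edgeFinset.mp he) with hv | hw
      · exact ⟨v, hv, Sym2.mem_mk_left v w⟩
      · exact ⟨w, hw, Sym2.mem_mk_right v w⟩
  · obtain ⟨u, huS, hu⟩ := hS s(v, w) (G.mem_edgeFinset.mpr hvw)
    rcases Sym2.mem_iff.mp hu with rfl | rfl
    · exact .inl huS
    · exact .inr huS

variable (G) [DecidableEq V] [Fintype V] [Fintype G.edgeSet]

/-- The colors `u` whose hyperedge `e_u = {e ∈ E | u ∈ e}` is miscolored by `Y`. -/
def mistakeSet (Y : Sym2 V → V) : Finset V :=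
  {u | ∃ e ∈ G.edgeFinset, u ∈ e ∧ Y e ≠ u}

@[simp]
theorem mem_mistakeSet {Y : Sym2 V → V} {u : V} :
    u ∈ G.mistakeSet Y ↔ ∃ e ∈ G.edgeFinset, u ∈ e ∧ Y e ≠ u := by
  simp [mistakeSet]

theorem isVertexCover_mistakeSet (Y : Sym2 V → V) : G.IsVertexCover (G.mistakeSet Y) := by
  intro v w hvw
  have he : s(v, w) ∈ G.edgeFinset := G.mem_edgeFinset.mpr hvw
  by_cases hYv : Y s(v, w) = v
  · exact .inr (G.mem_mistakeSet.mpr ⟨_, he, Sym2.mem_mk_right v w, by rw [hYv]; exact hvw.ne⟩)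
  · exact .inl (G.mem_mistakeSet.mpr ⟨_, he, Sym2.mem_mk_left v w, hYv⟩)

theorem exists_mistakeSet_subset {S : Set V} (hS : G.IsVertexCover S) :
    ∃ Y : Sym2 V → V, ↑(G.mistakeSet Y) ⊆ S := by
  classical
  refine ⟨fun e => if e.out.1 ∈ S then e.out.2 else e.out.1, fun u hu => ?_⟩
  obtain ⟨e, he, hue, hYe⟩ := G.mem_mistakeSet.mp hu
  by_contra huS
  have hout : s(e.out.1, e.out.2) = e := e.out_eq
  have hadj : G.Adj e.out.1 e.out.2 := by
    rw [← G.mem_edgeSet, hout]; exact G.mem_edgeFinset.mp he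
  rw [← hout, Sym2.mem_iff] at hue
  split_ifs at hYe with h1
  · rcases hue with rfl | rfl <;> tauto
  · rcases hue with rfl | rfl
    · exact hYe rfl
    · exact h1 ((hS hadj).resolve_right huS)

theorem card_filter_mem_edgeFinset [DecidableRel G.Adj] (u : V) :
    (G.edgeFinset.filter (u ∈ ·)).card = G.degree u := by
  rw [← G.incidenceFinset_eq_filter, card_incidenceFinset_eq_degree]

end SimpleGraph

open SimpleGraph in
/-- **Reduction from Vertex Cover to MinECC (Theorem 8).**
Given a finite simple graph `G = (V, E)`, form the edge-colored hypergraph `H` whose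
nodes are the edges of `G`, whose colors are the vertices of `G`, and which has, for
each vertex `u`, one unit-weight hyperedge `e_u = {e ∈ E : u ∈ e}` of color `u`.
Then the minimum over node colorings `Y : E → V` of the number of hyperedges at which
`Y` makes a mistake equals the minimum size of a vertex cover of `G`; moreover each
hyperedge `e_u` has exactly `deg_G(u)` elements. -/
theorem vertexCover_to_minECC {V : Type*} [Fintype V] [DecidableEq V]
    (G : SimpleGraph V) [DecidableRel G.Adj] :
    sInf { n : ℕ | ∃ Y : Sym2 V → V,
        n = (Finset.univ.filter
              (fun u : V => ∃ e ∈ G.edgeFinset, u ∈ e ∧ Y e ≠ u)).card } =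
      sInf { n : ℕ | ∃ S : Finset V,
        (∀ e ∈ G.edgeFinset, ∃ u ∈ S, u ∈ e) ∧ n = S.card } ∧
    ∀ u : V, (G.edgeFinset.filter (fun e => u ∈ e)).card = G.degree u := by
  refine ⟨csInf_eq_csInf_of_forall_exists_le ?_ ?_, G.card_filter_mem_edgeFinset⟩
  · rintro _ ⟨Y, rfl⟩
    exact ⟨_, ⟨G.mistakeSet Y,
      isVertexCover_coe_iff_forall_mem_edgeFinset.mp (G.isVertexCover_mistakeSet Y), rfl⟩, le_rfl⟩
  · rintro _ ⟨S, hS, rfl⟩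
    obtain ⟨Y, hY⟩ := G.exists_mistakeSet_subset (isVertexCover_coe_iff_forall_mem_edgeFinset.mpr hS)
    exact ⟨_, ⟨Y, rfl⟩, Finset.card_le_card (Finset.coe_subset.mp hY)⟩
end

section
/- (Theorem: reduction from MinECC to Vertex Cover, Theorem 9 of the paper.) Let H = (V, E, C, ℓ) be an edge-colored hypergraph with nonnegative weights w_e. Call (e, f) ∈ E × E a bad edge pair if e ∩ f ≠ ∅ and ℓ(e) ≠ ℓ(f). Define the conflict graph G with vertex set E, an edge between e and f whenever (e, f) is a bad edge pair, and vertex weight w_e on the vertex e. Then the minimum over all node colorings Y : V → C of the MinECC cost of Y equals the minimum total weight ∑_{e∈S} w_e over all vertex covers S ⊆ E of G (equivalently, over all sets S of hyperedges whose deletion leaves no bad edge pair). -/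
open scoped Classical

/-- **Reduction from MinECC to Vertex Cover (Theorem 9).**
Let `H = (V, E, C, ℓ)` be an edge-colored hypergraph with nonnegative weights `w`.
A pair `(e, f)` of hyperedges is *bad* if they intersect and have different colors.
Then the minimum MinECC cost over node colorings `Y : V → C` equals the minimum total
weight of a vertex cover of the conflict graph on `E` (whose edges are the bad pairs),
i.e., of a set `S` of hyperedges hitting every bad edge pair. -/
theorem minECC_to_vertexCover {V E C : Type*} [Fintype V] [Fintype E] [Fintype C]
    [Nonempty C] (edge : E → Finset V) (hne : ∀ e, (edge e).Nonempty)
    (ℓ : E → C) (w : E → ℝ) (hw : ∀ e, 0 ≤ w e) :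
    sInf { t : ℝ | ∃ Y : V → C,
        t = ∑ e ∈ Finset.univ.filter (fun e : E => ∃ v ∈ edge e, Y v ≠ ℓ e), w e } =
      sInf { t : ℝ | ∃ S : Finset E,
        (∀ e f : E, (edge e ∩ edge f).Nonempty → ℓ e ≠ ℓ f → e ∈ S ∨ f ∈ S) ∧
        t = ∑ e ∈ S, w e } := by
  set A := { t : ℝ | ∃ Y : V → C,
      t = ∑ e ∈ Finset.univ.filter (fun e : E => ∃ v ∈ edge e, Y v ≠ ℓ e), w e }
  set B := { t : ℝ | ∃ S : Finset E,
      (∀ e f : E, (edge e ∩ edge f).Nonempty → ℓ e ≠ ℓ f → e ∈ S ∨ f ∈ S) ∧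
      t = ∑ e ∈ S, w e }
  have hAne : A.Nonempty := ⟨_, ⟨fun _ => Classical.arbitrary C, rfl⟩⟩
  have hAbd : BddBelow A := by
    refine ⟨0, fun t ht => ?_⟩
    obtain ⟨Y, rfl⟩ := ht
    exact Finset.sum_nonneg fun e _ => hw e
  have hBbd : BddBelow B := by
    refine ⟨0, fun t ht => ?_⟩
    obtain ⟨S, _, rfl⟩ := ht
    exact Finset.sum_nonneg fun e _ => hw e
  -- A ⊆ B : the mistake set of a coloring is a vertex cover with the same cost
  have hAB : A ⊆ B := by
    rintro t ⟨Y, rfl⟩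
    refine ⟨Finset.univ.filter (fun e : E => ∃ v ∈ edge e, Y v ≠ ℓ e), ?_, rfl⟩
    intro e f hint hcol
    obtain ⟨v, hv⟩ := hint
    simp only [Finset.mem_inter] at hv
    by_cases hY : Y v = ℓ e
    · refine Or.inr ?_
      simp only [Finset.mem_filter, Finset.mem_univ, true_and]
      exact ⟨v, hv.2, by rw [hY]; exact hcol⟩
    · refine Or.inl ?_
      simp only [Finset.mem_filter, Finset.mem_univ, true_and]
      exact ⟨v, hv.1, hY⟩
  have hBne : B.Nonempty := hAne.mono hAB
  -- For every cover cost b ∈ B there is a ∈ A with a ≤ b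
  have hBA : ∀ b ∈ B, ∃ a ∈ A, a ≤ b := by
    rintro b ⟨S, hS, rfl⟩
    -- define a coloring from the cover
    set Y : V → C := fun v =>
      if h : ∃ e : E, e ∉ S ∧ v ∈ edge e then ℓ h.choose else Classical.arbitrary C
      with hYdef
    refine ⟨_, ⟨Y, rfl⟩, ?_⟩
    apply Finset.sum_le_sum_of_subset_of_nonneg
    · intro e he
      simp only [Finset.mem_filter, Finset.mem_univ, true_and] at he
      obtain ⟨v, hv, hne'⟩ := he
      by_contra heS
      apply hne'
      have h : ∃ e' : E, e' ∉ S ∧ v ∈ edge e' := ⟨e, heS, hv⟩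
      rw [hYdef]
      simp only [dif_pos h]
      obtain ⟨h1, h2⟩ := h.choose_spec
      by_contra hcol
      rcases hS h.choose e ⟨v, Finset.mem_inter.mpr ⟨h2, hv⟩⟩ hcol with h' | h'
      · exact h1 h'
      · exact heS h'
    · intro e _ _
      exact hw e
  refine le_antisymm ?_ (csInf_le_csInf hBbd hAne hAB)
  refine le_csInf hBne fun b hb => ?_
  obtain ⟨a, haA, hab⟩ := hBA b hb
  exact le_trans (csInf_le hAbd haA) hab
end

section
/- (Theorem 1 of the paper: the MinECC LP is at least as tight as the Node-MC LP.) Let H = (V, E, C, ℓ) be an edge-colored hypergraph with color set C = {1, …, k} and nonnegative weights w_e. Define the graph Ĝ with vertex set V ∪ {v_e : e ∈ E} ∪ {t_1, …, t_k} and edge set consisting of {v, v_e} for every e ∈ E and v ∈ e, together with {t_{ℓ(e)}, v_e} for every e ∈ E. Then for every feasible MinECC LP solution ({x_v^i}, {x_e}) for H there exist reals y_a^j for every vertex a of Ĝ and color j ∈ {1,…,k}, and reals d_a ≥ 0 for every vertex a of Ĝ with d_a = 0 for all a ∈ V ∪ {t_1,…,t_k}, satisfying: y_{t_i}^i = 0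 and y_{t_i}^j ≥ 1 for all i ≠ j; and y_a^j ≤ y_b^j + d_a and y_b^j ≤ y_a^j + d_b for every edge {a, b} of Ĝ and every color j; such that ∑_{e∈E} w_e d_{v_e} = ∑_{e∈E} w_e x_e. Consequently the optimal value of the Node-MC LP on Ĝ is at most the optimal value of the MinECC LP on H. -/
/-!
Take `y = x` on `V`, on the terminal `t_i` the indicator of the colors `j ≠ i`, and on `v_e` the
value `x_e` in its own color `ℓ(e)` and `1` in every other color; let `d` be `x_e` on `v_e` and `0`
elsewhere. The only constraint with content is `1 ≤ x_v^j + x_e` for `v ∈ e` and `j ≠ ℓ(e)`. It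
holds because `x_v^{ℓ(e)} ≤ x_e`, and any two coordinates of `x_v` sum to at least `1`: the
slacks `1 - x_v^i` are nonnegative and sum to `1`.
-/

theorem one_le_add_of_sum_eq_card_sub_one {ι : Type*} [Fintype ι] {x : ι → ℝ}
    (hx : ∀ i, x i ≤ 1) (hsum : ∑ i, x i = Fintype.card ι - 1) {j l : ι} (hjl : j ≠ l) :
    1 ≤ x j + x l := by
  classical
  have hslack : ∑ i, (1 - x i) = 1 := by
    rw [Finset.sum_sub_distrib, hsum]; simp
  have hpair : ∑ i ∈ {j, l}, (1 - x i) ≤ ∑ i, (1 - x i) :=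
    Finset.sum_le_sum_of_subset_of_nonneg (Finset.subset_univ _)
      fun i _ _ => sub_nonneg.2 (hx i)
  rw [Finset.sum_pair hjl, hslack] at hpair
  linarith

section NodeMC

variable {V E : Type*} {k : ℕ}

def nodeMCPotential (ℓ : E → Fin k) (x : V → Fin k → ℝ) (xe : E → ℝ) :
    V ⊕ E ⊕ Fin k → Fin k → ℝ
  | .inl v, j => x v j
  | .inr (.inl e), j => if j = ℓ e then xe e else 1
  | .inr (.inr i), j => if j = i then 0 else 1

def nodeMCWeight (xe : E → ℝ) : V ⊕ E ⊕ Fin k → ℝ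
  | .inr (.inl e) => xe e
  | _ => 0

def NodeMCEdgeFeasible {N : Type*} (y : N → Fin k → ℝ) (d : N → ℝ) (a b : N) (j : Fin k) :
    Prop :=
  y a j ≤ y b j + d a ∧ y b j ≤ y a j + d b

variable (ℓ : E → Fin k) (x : V → Fin k → ℝ) (xe : E → ℝ)

theorem nodeMCWeight_nonneg (hxe : ∀ e, 0 ≤ xe e) (a : V ⊕ E ⊕ Fin k) :
    0 ≤ nodeMCWeight xe a := by
  rcases a with v | e | i
  exacts [le_rfl, hxe e, le_rfl]

theorem nodeMCEdgeFeasible_vertex_hyperedge {v : V} {e : E} (j : Fin k)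
    (hx : ∀ i, x v i ∈ Set.Icc (0 : ℝ) 1) (hsum : ∑ i, x v i = (k : ℝ) - 1)
    (hve : x v (ℓ e) ≤ xe e) :
    NodeMCEdgeFeasible (nodeMCPotential ℓ x xe) (nodeMCWeight xe) (.inl v) (.inr (.inl e)) j := by
  simp only [NodeMCEdgeFeasible, nodeMCPotential, nodeMCWeight, add_zero]
  split_ifs with hj
  · subst hj
    exact ⟨hve, le_add_of_nonneg_left (hx _).1⟩
  · have hpair := one_le_add_of_sum_eq_card_sub_one (fun i => (hx i).2)
      (by simpa using hsum) hj
    exact ⟨(hx j).2, by linarith⟩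

theorem nodeMCEdgeFeasible_terminal_hyperedge (e : E) (j : Fin k) (hxe : 0 ≤ xe e) :
    NodeMCEdgeFeasible (nodeMCPotential ℓ x xe) (nodeMCWeight xe)
      (.inr (.inr (ℓ e))) (.inr (.inl e)) j := by
  simp only [NodeMCEdgeFeasible, nodeMCPotential, nodeMCWeight, add_zero]
  split_ifs <;> constructor <;> linarith

end NodeMC

theorem minECC_LP_tighter_than_nodeMC_LP_general {V E : Type*} [Fintype V] [Fintype E]
    (k : ℕ)
    (edge : E → Finset V)
    (ℓ : E → Fin k) (w : E → ℝ)
    (x : V → Fin k → ℝ) (xe : E → ℝ)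
    (hx01 : ∀ v i, x v i ∈ Set.Icc (0 : ℝ) 1)
    (hxsum : ∀ v, ∑ i, x v i = (k : ℝ) - 1)
    (hxe01 : ∀ e, xe e ∈ Set.Icc (0 : ℝ) 1)
    (hxe : ∀ e, ∀ v ∈ edge e, x v (ℓ e) ≤ xe e) :
    ∃ (y : V ⊕ E ⊕ Fin k → Fin k → ℝ) (d : V ⊕ E ⊕ Fin k → ℝ),
      (∀ a, 0 ≤ d a) ∧
      (∀ v : V, d (Sum.inl v) = 0) ∧
      (∀ i : Fin k, d (Sum.inr (Sum.inr i)) = 0) ∧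
      (∀ i : Fin k, y (Sum.inr (Sum.inr i)) i = 0) ∧
      (∀ i j : Fin k, i ≠ j → 1 ≤ y (Sum.inr (Sum.inr i)) j) ∧
      (∀ e : E, ∀ v ∈ edge e, ∀ j : Fin k,
        y (Sum.inl v) j ≤ y (Sum.inr (Sum.inl e)) j + d (Sum.inl v) ∧
        y (Sum.inr (Sum.inl e)) j ≤ y (Sum.inl v) j + d (Sum.inr (Sum.inl e))) ∧
      (∀ e : E, ∀ j : Fin k,
        y (Sum.inr (Sum.inr (ℓ e))) j ≤
          y (Sum.inr (Sum.inl e)) j + d (Sum.inr (Sum.inr (ℓ e))) ∧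
        y (Sum.inr (Sum.inl e)) j ≤
          y (Sum.inr (Sum.inr (ℓ e))) j + d (Sum.inr (Sum.inl e))) ∧
      (∑ e, w e * d (Sum.inr (Sum.inl e)) = ∑ e, w e * xe e) := by
  refine ⟨nodeMCPotential ℓ x xe, nodeMCWeight xe,
    nodeMCWeight_nonneg xe fun e => (hxe01 e).1, fun _ => rfl, fun _ => rfl,
    fun i => by simp [nodeMCPotential], fun i j hij => by simp [nodeMCPotential, hij.symm],
    fun e v hv j => nodeMCEdgeFeasible_vertex_hyperedge ℓ x xe j (hx01 v) (hxsum v) (hxe e v hv),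
    fun e j => nodeMCEdgeFeasible_terminal_hyperedge ℓ x xe e j (hxe01 e).1, rfl⟩

/-- **Theorem 1: the MinECC LP is at least as tight as the Node-MC LP.**
Given an edge-colored hypergraph `H` with colors `Fin k` and nonnegative weights,
form the graph `Ĝ` on the vertices `V ⊕ E ⊕ Fin k` (original nodes, a node `v_e` per
hyperedge, and terminals `t_1, …, t_k`), with edges `{v, v_e}` for `v ∈ e` and
`{t_{ℓ(e)}, v_e}`.  Every feasible MinECC LP solution `(x, xe)` for `H` gives rise to
a feasible Node-MC LP solution `(y, d)` on `Ĝ` (with `d = 0` on `V` and the terminals)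
of equal value `∑ w_e d_{v_e} = ∑ w_e xe_e`. -/
theorem minECC_LP_tighter_than_nodeMC_LP {V E : Type*} [Fintype V] [Fintype E]
    (k : ℕ) (hk : 1 ≤ k)
    (edge : E → Finset V) (hne : ∀ e, (edge e).Nonempty)
    (ℓ : E → Fin k) (w : E → ℝ) (hw : ∀ e, 0 ≤ w e)
    (x : V → Fin k → ℝ) (xe : E → ℝ)
    (hx01 : ∀ v i, x v i ∈ Set.Icc (0 : ℝ) 1)
    (hxsum : ∀ v, ∑ i, x v i = (k : ℝ) - 1)
    (hxe01 : ∀ e, xe e ∈ Set.Icc (0 : ℝ) 1)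
    (hxe : ∀ e, ∀ v ∈ edge e, x v (ℓ e) ≤ xe e) :
    ∃ (y : V ⊕ E ⊕ Fin k → Fin k → ℝ) (d : V ⊕ E ⊕ Fin k → ℝ),
      (∀ a, 0 ≤ d a) ∧
      (∀ v : V, d (Sum.inl v) = 0) ∧
      (∀ i : Fin k, d (Sum.inr (Sum.inr i)) = 0) ∧
      (∀ i : Fin k, y (Sum.inr (Sum.inr i)) i = 0) ∧
      (∀ i j : Fin k, i ≠ j → 1 ≤ y (Sum.inr (Sum.inr i)) j) ∧
      (∀ e : E, ∀ v ∈ edge e, ∀ j : Fin k,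
        y (Sum.inl v) j ≤ y (Sum.inr (Sum.inl e)) j + d (Sum.inl v) ∧
        y (Sum.inr (Sum.inl e)) j ≤ y (Sum.inl v) j + d (Sum.inr (Sum.inl e))) ∧
      (∀ e : E, ∀ j : Fin k,
        y (Sum.inr (Sum.inr (ℓ e))) j ≤
          y (Sum.inr (Sum.inl e)) j + d (Sum.inr (Sum.inr (ℓ e))) ∧
        y (Sum.inr (Sum.inl e)) j ≤
          y (Sum.inr (Sum.inr (ℓ e))) j + d (Sum.inr (Sum.inl e))) ∧
      (∑ e, w e * d (Sum.inr (Sum.inl e)) = ∑ e, w e * xe e) :=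
  minECC_LP_tighter_than_nodeMC_LP_general k edge ℓ w x xe hx01 hxsum hxe01 hxe
end

section
/- (Lemma 1 of the paper, combinatorial part.) Fix an integer k ≥ 3. Let H_k be the edge-colored hypergraph whose vertices are the 2-element subsets {i, j} of {1, …, k}, and which has, for each color c ∈ {1, …, k}, exactly one hyperedge e_c = { {i, c} : i ∈ {1,…,k}, i ≠ c } of color c and unit weight (so H_k has k hyperedges, each of size k−1). Then every node coloring Y (a map from 2-element subsets of {1,…,k} to {1,…,k}) makes a mistake at (i.e., fails to satisfy) at least k−1 of the k hyperedges, and there exists a node coloring that makes a mistake at exactly k−1 of them. -/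
open scoped Classical

/-- **Lemma 1 (combinatorial part).**
For `k ≥ 3`, let `H_k` be the edge-colored hypergraph whose nodes are the 2-element
subsets of `{1, …, k}` and whose hyperedges are `e_c = { {i, c} : i ≠ c }` with color
`c`, one for each color `c`.  Every node coloring `Y` makes a mistake at (fails to
satisfy) at least `k − 1` of the `k` hyperedges, and some node coloring makes a
mistake at exactly `k − 1` of them. -/
theorem gap_instance_combinatorial (k : ℕ) (hk : 3 ≤ k) :
    (∀ Y : Finset (Fin k) → Fin k,
      k - 1 ≤ (Finset.univ.filter
        (fun c : Fin k => ∃ i : Fin k, i ≠ c ∧ Y {i, c} ≠ c)).card) ∧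
    (∃ Y : Finset (Fin k) → Fin k,
      (Finset.univ.filter
        (fun c : Fin k => ∃ i : Fin k, i ≠ c ∧ Y {i, c} ≠ c)).card = k - 1) := by
  have hk0 : 0 < k := by omega
  constructor
  · intro Y
    have hsplit : (Finset.univ.filter
          (fun c : Fin k => ∃ i : Fin k, i ≠ c ∧ Y {i, c} ≠ c)).card
        + (Finset.univ.filter
          (fun c : Fin k => ¬ ∃ i : Fin k, i ≠ c ∧ Y {i, c} ≠ c)).card = k := by
      rw [Finset.card_filter_add_card_filter_not]
      simp
    have hle : (Finset.univ.filter
        (fun c : Fin k => ¬ ∃ i : Fin k, i ≠ c ∧ Y {i, c} ≠ c)).card ≤ 1 := by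
      rw [Finset.card_le_one]
      intro a ha b hb
      simp only [Finset.mem_filter, not_exists, not_and, not_not] at ha hb
      by_contra hab
      have h1 : Y {b, a} = a := ha.2 b (fun h => hab h.symm)
      have h2 : Y {a, b} = b := hb.2 a hab
      rw [Finset.pair_comm] at h1
      exact hab (h1.symm.trans h2)
    omega
  · refine ⟨fun _ => ⟨0, hk0⟩, ?_⟩
    have : (Finset.univ.filter
        (fun c : Fin k => ∃ i : Fin k, i ≠ c ∧ (⟨0, hk0⟩ : Fin k) ≠ c))
        = Finset.univ.filter (fun c : Fin k => c ≠ ⟨0, hk0⟩) := by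
      apply Finset.filter_congr
      intro c _
      constructor
      · rintro ⟨i, _, h⟩
        exact Ne.symm h
      · intro hc
        -- need some i ≠ c; since k ≥ 3 there are at least two elements ≠ c
        haveI : Nontrivial (Fin k) := Fin.nontrivial_iff_two_le.mpr (by omega)
        obtain ⟨i, hi⟩ := exists_ne c
        exact ⟨i, hi, Ne.symm hc⟩
    rw [this, Finset.filter_ne', Finset.card_erase_of_mem (Finset.mem_univ _)]
    simp
end

section
/- (Lemma 1 of the paper, LP part.) Fix an integer k ≥ 3 and let H_k be the edge-colored hypergraph whose vertices are the 2-element subsets {i, j} of {1, …, k}, with one unit-weight hyperedge e_c = { {i, c} : i ≠ c } of color c for each c ∈ {1, …, k}. Then there is a feasible MinECC LP solution for H_k of value k/2: namely, set x_{{i,j}}^i = x_{{i,j}}^j = 1/2 and x_{{i,j}}^t = 1 for t ∉ {i, j}, and x_{e_c} = 1/2 for every c. In particular, combined with the fact that every node coloring of H_k makes at least k−1 mistakes, the integrality gap of the MinECC LP on H_k is at least 2(1 − 1/k). -/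
open scoped Classical

/-- **Lemma 1 (LP part).**
For `k ≥ 3`, the hypergraph `H_k` (nodes: 2-element subsets `{i, j}` of `{1, …, k}`;
one unit-weight hyperedge `e_c = { {i, c} : i ≠ c }` of color `c` per color) admits a
feasible MinECC LP solution of value `k / 2`: node-color variables in `[0,1]` summing
to `k − 1` at each 2-element subset, edge variables `xe c ∈ [0,1]` dominating
`x {i,c} c` for every node `{i, c}` of `e_c`, and `∑ c, xe c = k / 2`. -/
theorem gap_instance_LP (k : ℕ) (hk : 3 ≤ k) :
    ∃ (x : Finset (Fin k) → Fin k → ℝ) (xe : Fin k → ℝ),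
      (∀ s : Finset (Fin k), s.card = 2 → ∀ t : Fin k, x s t ∈ Set.Icc (0 : ℝ) 1) ∧
      (∀ s : Finset (Fin k), s.card = 2 → ∑ t, x s t = (k : ℝ) - 1) ∧
      (∀ c : Fin k, xe c ∈ Set.Icc (0 : ℝ) 1) ∧
      (∀ c i : Fin k, i ≠ c → x {i, c} c ≤ xe c) ∧
      (∑ c, xe c = (k : ℝ) / 2) := by
  refine ⟨fun s t => if t ∈ s then (1:ℝ)/2 else 1, fun _ => 1/2, ?_, ?_, ?_, ?_, ?_⟩
  · intro s _ t
    by_cases h : t ∈ s <;> simp [h] <;> norm_num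
  · intro s hs
    rw [← Finset.sum_filter_add_sum_filter_not Finset.univ (· ∈ s)]
    have h1 : Finset.univ.filter (· ∈ s) = s := by
      ext t; simp
    have h2 : (Finset.univ.filter (¬ · ∈ s)).card = k - 2 := by
      rw [Finset.filter_not, Finset.card_sdiff_of_subset (by simp [h1, Finset.subset_univ])]
      simp [h1, hs]
    rw [Finset.sum_congr rfl (fun t ht => if_pos (by simpa using ht)),
        Finset.sum_congr rfl (fun t ht => if_neg (by simpa using (Finset.mem_filter.mp ht).2))]
    rw [Finset.sum_const, Finset.sum_const, h1, hs, h2]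
    have : (2:ℕ) ≤ k := by omega
    simp only [nsmul_eq_mul]
    rw [Nat.cast_sub this]
    push_cast
    ring
  · intro c; constructor <;> norm_num
  · intro c i _; simp
  · simp
    ring
end

section
/- (Lemma 4 of the paper: the color threshold lemma.) Let k ≥ 2 be an integer, let c ∈ {1, …, k} be a color, and let u, v be two nodes with reals x_u^i, x_v^i ∈ [0,1] for each i ∈ {1, …, k} satisfying ∑_{i=1}^k x_u^i = k − 1 and ∑_{i=1}^k x_v^i = k − 1. Set x_e = max(x_u^c, x_v^c). For each color j ≠ c let m_j = min(x_u^j, x_v^j), and let z_1 ≤ z_2 ≤ ⋯ ≤ z_{k−1} be the values (m_j)_{j ≠ c} arranged in nondecreasing order. Then for every integer t with 1 ≤ t ≤ k/2 one has t ≤ x_e + z_t + z_{t+1} + ⋯ + z_{2t−1}. -/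
/-- **Lemma 4 (the color threshold lemma).**
Let `e = (u, v)` be an edge of color `c`, with LP node-color variables
`xu i, xv i ∈ [0,1]` for `i ∈ {1, …, k}`, each family summing to `k − 1`.  Let
`xe = max (xu c) (xv c)`, and let `z 0 ≤ z 1 ≤ ⋯ ≤ z (k-2)` be the values
`min (xu j) (xv j)` over colors `j ≠ c`, arranged in nondecreasing order
(via a bijection `g`).  Then for every integer `t` with `1 ≤ t` and `2t ≤ k`,
`t ≤ xe + z_t + z_{t+1} + ⋯ + z_{2t−1}`, where `z_j` (1-indexed) is `z ⟨j-1⟩`. -/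
theorem color_threshold_lemma (k : ℕ) (hk : 2 ≤ k) (c : Fin k)
    (xu xv : Fin k → ℝ)
    (hxu : ∀ i, xu i ∈ Set.Icc (0 : ℝ) 1) (hxv : ∀ i, xv i ∈ Set.Icc (0 : ℝ) 1)
    (hsu : ∑ i, xu i = (k : ℝ) - 1) (hsv : ∑ i, xv i = (k : ℝ) - 1)
    (xe : ℝ) (hxe : xe = max (xu c) (xv c))
    (z : Fin (k - 1) → ℝ) (hmono : Monotone z)
    (g : Fin (k - 1) ≃ {j : Fin k // j ≠ c})
    (hz : ∀ i, z i = min (xu (g i)) (xv (g i)))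
    (t : ℕ) (ht1 : 1 ≤ t) (ht2 : 2 * t ≤ k) :
    (t : ℝ) ≤ xe + ∑ i ∈ Finset.univ.filter
        (fun i : Fin (k - 1) => t - 1 ≤ (i : ℕ) ∧ (i : ℕ) < 2 * t - 1), z i := by
  classical
  have ht1' : t - 1 < k - 1 := by omega
  -- auxiliary functions
  set p : Fin (k - 1) → ℝ := fun i => 1 - xu (g i) with hp
  set q : Fin (k - 1) → ℝ := fun i => 1 - xv (g i) with hq
  set y : Fin (k - 1) → ℝ := fun i => 1 - z i with hyy
  have hy : ∀ i, y i = max (p i) (q i) := by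
    intro i
    simp only [hyy, hp, hq, hz]
    rcases le_total (xu (g i)) (xv (g i)) with h | h
    · rw [min_eq_left h, max_eq_left (by linarith)]
    · rw [min_eq_right h, max_eq_right (by linarith)]
  have hp0 : ∀ i, 0 ≤ p i := fun i => by
    have := (hxu (g i)).2; simp only [hp]; linarith
  have hq0 : ∀ i, 0 ≤ q i := fun i => by
    have := (hxv (g i)).2; simp only [hq]; linarith
  -- sums of p and q
  have card_ne : (Finset.univ.erase c).card = k - 1 := by
    rw [Finset.card_erase_of_mem (Finset.mem_univ c), Finset.card_univ, Fintype.card_fin]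
  have hsump : ∑ i, p i = xu c := by
    have h1 : ∑ i, p i = ∑ j : {j : Fin k // j ≠ c}, (1 - xu j) :=
      Fintype.sum_equiv g _ _ (fun i => rfl)
    have h2 : ∑ j ∈ Finset.univ.erase c, (1 - xu j)
        = ∑ j : {j : Fin k // j ≠ c}, (1 - xu (j : Fin k)) :=
      Finset.sum_subtype _ (by simp) _
    have h3 : ∑ j ∈ Finset.univ.erase c, (1 - xu j)
        = (∑ j : Fin k, (1 - xu j)) - (1 - xu c) :=
      Finset.sum_erase_eq_sub (Finset.mem_univ c)
    have h4 : ∑ j : Fin k, (1 - xu j) = (k : ℝ) - ((k : ℝ) - 1) := by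
      rw [Finset.sum_sub_distrib, hsu, Finset.sum_const, Finset.card_univ, Fintype.card_fin,
        nsmul_eq_mul, mul_one]
    rw [h1, ← h2, h3, h4]; ring
  have hsumq : ∑ i, q i = xv c := by
    have h1 : ∑ i, q i = ∑ j : {j : Fin k // j ≠ c}, (1 - xv j) :=
      Fintype.sum_equiv g _ _ (fun i => rfl)
    have h2 : ∑ j ∈ Finset.univ.erase c, (1 - xv j)
        = ∑ j : {j : Fin k // j ≠ c}, (1 - xv (j : Fin k)) :=
      Finset.sum_subtype _ (by simp) _
    have h3 : ∑ j ∈ Finset.univ.erase c, (1 - xv j)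
        = (∑ j : Fin k, (1 - xv j)) - (1 - xv c) :=
      Finset.sum_erase_eq_sub (Finset.mem_univ c)
    have h4 : ∑ j : Fin k, (1 - xv j) = (k : ℝ) - ((k : ℝ) - 1) := by
      rw [Finset.sum_sub_distrib, hsv, Finset.sum_const, Finset.card_univ, Fintype.card_fin,
        nsmul_eq_mul, mul_one]
    rw [h1, ← h2, h3, h4]; ring
  -- the index sets
  set S : Finset (Fin (k - 1)) := Finset.univ.filter
      (fun i : Fin (k - 1) => t - 1 ≤ (i : ℕ) ∧ (i : ℕ) < 2 * t - 1) with hS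
  set T : Finset (Fin (k - 1)) := Finset.univ.filter
      (fun i : Fin (k - 1) => (i : ℕ) < t - 1) with hT
  have hScard : S.card = t := by
    have himg : S.image Fin.val = Finset.Ico (t - 1) (2 * t - 1) := by
      ext m
      simp only [Finset.mem_image, Finset.mem_Ico, hS, Finset.mem_filter, Finset.mem_univ,
        true_and]
      constructor
      · rintro ⟨i, ⟨h1, h2⟩, rfl⟩; exact ⟨h1, h2⟩
      · rintro ⟨h1, h2⟩; exact ⟨⟨m, by omega⟩, ⟨h1, h2⟩, rfl⟩
    have := Finset.card_image_of_injective S (Fin.val_injective)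
    rw [himg, Nat.card_Ico] at this
    omega
  have hTcard : T.card = t - 1 := by
    have himg : T.image Fin.val = Finset.range (t - 1) := by
      ext m
      simp only [Finset.mem_image, Finset.mem_range, hT, Finset.mem_filter, Finset.mem_univ,
        true_and]
      constructor
      · rintro ⟨i, h1, rfl⟩; exact h1
      · intro h1; exact ⟨⟨m, by omega⟩, h1, rfl⟩
    have := Finset.card_image_of_injective T (Fin.val_injective)
    rw [himg, Finset.card_range] at this
    omega
  have hST : Disjoint S T := by
    rw [Finset.disjoint_left]
    intro i hiS hiT
    simp only [hS, Finset.mem_filter, Finset.mem_univ, true_and] at hiS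
    simp only [hT, Finset.mem_filter, Finset.mem_univ, true_and] at hiT
    omega
  -- the pivot value
  set i0 : Fin (k - 1) := ⟨t - 1, ht1'⟩ with hi0
  set b1 : ℝ := y i0 with hb1
  have hb1nn : 0 ≤ b1 := by
    rw [hb1, hy]; exact le_trans (hp0 i0) (le_max_left _ _)
  have hyS : ∀ i ∈ S, y i ≤ b1 := by
    intro i hi
    simp only [hS, Finset.mem_filter, Finset.mem_univ, true_and] at hi
    have : i0 ≤ i := by rw [Fin.le_def]; exact hi.1
    have := hmono this
    simp only [hyy, hb1]; linarith
  have hyT : ∀ i ∈ T, b1 ≤ y i := by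
    intro i hi
    simp only [hT, Finset.mem_filter, Finset.mem_univ, true_and] at hi
    have : i ≤ i0 := by rw [Fin.le_def]; exact le_of_lt hi
    have := hmono this
    simp only [hyy, hb1]; linarith
  -- partitions by which coordinate achieves the max
  set SP : Finset (Fin (k - 1)) := S.filter (fun i => q i ≤ p i) with hSP
  set SQ : Finset (Fin (k - 1)) := S.filter (fun i => ¬ q i ≤ p i) with hSQ
  set TP : Finset (Fin (k - 1)) := T.filter (fun i => q i ≤ p i) with hTP
  set TQ : Finset (Fin (k - 1)) := T.filter (fun i => ¬ q i ≤ p i) with hTQ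
  have hScards : SP.card + SQ.card = t := by
    rw [hSP, hSQ, Finset.card_filter_add_card_filter_not, hScard]
  have hTcards : TP.card + TQ.card = t - 1 := by
    rw [hTP, hTQ, Finset.card_filter_add_card_filter_not, hTcard]
  -- the block sum of y splits as sums of p and q
  have hsplit : ∑ i ∈ S, y i = ∑ i ∈ SP, p i + ∑ i ∈ SQ, q i := by
    rw [← Finset.sum_filter_add_sum_filter_not S (fun i => q i ≤ p i), ← hSP, ← hSQ]
    congr 1
    · refine Finset.sum_congr rfl (fun i hi => ?_)
      rw [hSP, Finset.mem_filter] at hi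
      rw [hy, max_eq_left hi.2]
    · refine Finset.sum_congr rfl (fun i hi => ?_)
      rw [hSQ, Finset.mem_filter] at hi
      rw [hy, max_eq_right (le_of_not_ge hi.2)]
  -- upper bounds by b1 on the block
  have hSPb1 : ∑ i ∈ SP, p i ≤ (SP.card : ℝ) * b1 := by
    rw [← nsmul_eq_mul]
    refine Finset.sum_le_card_nsmul _ _ _ (fun i hi => ?_)
    rw [hSP, Finset.mem_filter] at hi
    have := hyS i hi.1
    rw [hy, max_eq_left hi.2] at this
    exact this
  have hSQb1 : ∑ i ∈ SQ, q i ≤ (SQ.card : ℝ) * b1 := by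
    rw [← nsmul_eq_mul]
    refine Finset.sum_le_card_nsmul _ _ _ (fun i hi => ?_)
    rw [hSQ, Finset.mem_filter] at hi
    have := hyS i hi.1
    rw [hy, max_eq_right (le_of_not_ge hi.2)] at this
    exact this
  -- lower bounds by b1 on the top part
  have hTPb1 : (TP.card : ℝ) * b1 ≤ ∑ i ∈ TP, p i := by
    rw [← nsmul_eq_mul]
    refine Finset.card_nsmul_le_sum _ _ _ (fun i hi => ?_)
    rw [hTP, Finset.mem_filter] at hi
    have := hyT i hi.1
    rw [hy, max_eq_left hi.2] at this
    exact this
  have hTQb1 : (TQ.card : ℝ) * b1 ≤ ∑ i ∈ TQ, q i := by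
    rw [← nsmul_eq_mul]
    refine Finset.card_nsmul_le_sum _ _ _ (fun i hi => ?_)
    rw [hTQ, Finset.mem_filter] at hi
    have := hyT i hi.1
    rw [hy, max_eq_right (le_of_not_ge hi.2)] at this
    exact this
  -- total-mass bounds
  have hPdisj : Disjoint SP TP := by
    refine Finset.disjoint_of_subset_left (Finset.filter_subset _ _)
      (Finset.disjoint_of_subset_right (Finset.filter_subset _ _) hST)
  have hQdisj : Disjoint SQ TQ := by
    refine Finset.disjoint_of_subset_left (Finset.filter_subset _ _)
      (Finset.disjoint_of_subset_right (Finset.filter_subset _ _) hST)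
  have hPmass : ∑ i ∈ SP, p i + ∑ i ∈ TP, p i ≤ xu c := by
    rw [← Finset.sum_union hPdisj, ← hsump]
    exact Finset.sum_le_sum_of_subset_of_nonneg (Finset.subset_univ _)
      (fun i _ _ => hp0 i)
  have hQmass : ∑ i ∈ SQ, q i + ∑ i ∈ TQ, q i ≤ xv c := by
    rw [← Finset.sum_union hQdisj, ← hsumq]
    exact Finset.sum_le_sum_of_subset_of_nonneg (Finset.subset_univ _)
      (fun i _ _ => hq0 i)
  -- the key bound: the block sum of y is at most xe
  have hkey : ∑ i ∈ S, y i ≤ xe := by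
    rcases le_or_gt SQ.card TP.card with hc | hc
    · -- block y-sum ≤ xu c ≤ xe
      have h1 : (SQ.card : ℝ) * b1 ≤ (TP.card : ℝ) * b1 :=
        mul_le_mul_of_nonneg_right (by exact_mod_cast hc) hb1nn
      have h2 : xu c ≤ xe := hxe ▸ le_max_left _ _
      rw [hsplit]; linarith
    · -- SP.card ≤ TQ.card, block y-sum ≤ xv c ≤ xe
      have hcards : SP.card ≤ TQ.card := by omega
      have h1 : (SP.card : ℝ) * b1 ≤ (TQ.card : ℝ) * b1 :=
        mul_le_mul_of_nonneg_right (by exact_mod_cast hcards) hb1nn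
      have h2 : xv c ≤ xe := hxe ▸ le_max_right _ _
      rw [hsplit]; linarith
  -- conclude
  have hzsum : ∑ i ∈ S, z i = (t : ℝ) - ∑ i ∈ S, y i := by
    have h1 : ∀ i ∈ S, z i = 1 - y i := by
      intro i _; simp only [hyy]; ring
    rw [Finset.sum_congr rfl h1, Finset.sum_sub_distrib, Finset.sum_const, hScard,
      nsmul_eq_mul, mul_one]
  rw [hzsum]
  linarith
end

section
/- (Lemma 6 of the paper, part A: bound on auxiliary LP (4).) Fix an integer q with 1 ≤ q ≤ 6. For all reals χ, ω_1, …, ω_6 satisfying: ω_i ≤ ω_{i+1} for i = 1, …, 5; χ − ω_1 ≤ 1; 2χ − ω_2 − ω_3 ≤ 1; 3χ − 3ω_5 ≤ 1; χ ≥ 2; and ω_q ≤ (7/8)χ; it holds that (q/(q+1))·(7/8)·χ − ∑_{j=1}^q ω_j/(j(j+1)) ≤ 1/2. -/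
/-- **Lemma 6, part A: bound on auxiliary LP (4).**
For every integer `1 ≤ q ≤ 6` and all reals `χ, ω₁, …, ω₆` satisfying the constraints
(A1)–(A10), the objective `(q/(q+1))·(7/8)·χ − ∑_{j=1}^q ω_j/(j(j+1))` is at most
`1/2`. -/
theorem auxiliary_LP_A_bound (q : ℕ) (hq1 : 1 ≤ q) (hq6 : q ≤ 6)
    (χ : ℝ) (ω : ℕ → ℝ)
    (hmono : ∀ i : ℕ, 1 ≤ i → i ≤ 5 → ω i ≤ ω (i + 1))
    (hA6 : χ - ω 1 ≤ 1)
    (hA7 : 2 * χ - ω 2 - ω 3 ≤ 1)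
    (hA8 : 3 * χ - 3 * ω 5 ≤ 1)
    (hA9 : 2 ≤ χ)
    (hA10 : ω q ≤ 7 / 8 * χ) :
    ((q : ℝ) / (q + 1)) * (7 / 8) * χ -
      ∑ j ∈ Finset.Icc 1 q, ω j / ((j : ℝ) * (j + 1)) ≤ 1 / 2 := by
  have h1 := hmono 1 (by norm_num) (by norm_num)
  have h2 := hmono 2 (by norm_num) (by norm_num)
  have h3 := hmono 3 (by norm_num) (by norm_num)
  have h4 := hmono 4 (by norm_num) (by norm_num)
  have h5 := hmono 5 (by norm_num) (by norm_num)
  norm_num at h1 h2 h3 h4 h5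
  interval_cases q <;>
    (norm_num [Finset.sum_Icc_succ_top, show (1:ℕ)/2 = 0 from rfl]) <;>
    linarith [hA9, hA10, hA6, hA7, hA8, h1, h2, h3, h4, h5]
end

section
/- (Lemma 6 of the paper, part B: bound on auxiliary LP (5).) Fix integers p, q with 1 ≤ p ≤ 5 and p ≤ q ≤ 10, and set ω_0 = 0. For all reals χ, ω_1, …, ω_10 satisfying: ω_i ≤ ω_{i+1} for i = 1, …, 9; χ − ω_1 ≤ 1; 2χ − ω_2 − ω_3 ≤ 1; 3χ − ω_3 − ω_4 − ω_5 ≤ 1; 4χ − 4ω_7 ≤ 1; ω_{p−1} ≤ 1; ω_p ≥ 1; and ω_q ≤ (7/8)χ; it holds that 1/p + ((q/(q+1))·(7/8) − 1/2)·χ − ∑_{j=p}^q ω_j/(j(j+1)) ≤ 1/2. -/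
set_option maxHeartbeats 2000000 in


/-- **Lemma 6, part B: bound on auxiliary LP (5).**
For all integers `1 ≤ p ≤ 5` and `p ≤ q ≤ 10`, setting `ω₀ = 0`, every choice of
reals `χ, ω₁, …, ω₁₀` satisfying the constraints (B1)–(B16) has objective
`1/p + ((q/(q+1))·(7/8) − 1/2)·χ − ∑_{j=p}^q ω_j/(j(j+1))` at most `1/2`. -/
theorem auxiliary_LP_B_bound (p q : ℕ) (hp1 : 1 ≤ p) (hp5 : p ≤ 5)
    (hpq : p ≤ q) (hq10 : q ≤ 10)
    (χ : ℝ) (ω : ℕ → ℝ) (hω0 : ω 0 = 0)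
    (hmono : ∀ i : ℕ, 1 ≤ i → i ≤ 9 → ω i ≤ ω (i + 1))
    (hB10 : χ - ω 1 ≤ 1)
    (hB11 : 2 * χ - ω 2 - ω 3 ≤ 1)
    (hB12 : 3 * χ - ω 3 - ω 4 - ω 5 ≤ 1)
    (hB13 : 4 * χ - 4 * ω 7 ≤ 1)
    (hB14 : ω (p - 1) ≤ 1)
    (hB15 : 1 ≤ ω p)
    (hB16 : ω q ≤ 7 / 8 * χ) :
    1 / (p : ℝ) + (((q : ℝ) / (q + 1)) * (7 / 8) - 1 / 2) * χ -
      ∑ j ∈ Finset.Icc p q, ω j / ((j : ℝ) * (j + 1)) ≤ 1 / 2 := by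
  have h1 := hmono 1 (by norm_num) (by norm_num)
  have h2 := hmono 2 (by norm_num) (by norm_num)
  have h3 := hmono 3 (by norm_num) (by norm_num)
  have h4 := hmono 4 (by norm_num) (by norm_num)
  have h5 := hmono 5 (by norm_num) (by norm_num)
  have h6 := hmono 6 (by norm_num) (by norm_num)
  have h7 := hmono 7 (by norm_num) (by norm_num)
  have h8 := hmono 8 (by norm_num) (by norm_num)
  have h9 := hmono 9 (by norm_num) (by norm_num)
  interval_cases p <;> interval_cases q <;>
    (rw [Nat.Icc_eq_range']
     norm_num [Finset.sum, List.range'] at hB14 ⊢ <;> linarith)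
end

section
/- (Strictly tighter LP instance, from the appendix of the paper.) Let H be the edge-colored star: vertex set {v_0, v_1, v_2, v_3}, color set {1, 2, 3}, and three unit-weight hyperedges e_i = {v_0, v_i} with ℓ(e_i) = i for i = 1, 2, 3. Then: (a) every feasible MinECC LP solution for H has value ∑_{i=1}^3 x_{e_i} ≥ 2; and (b) for the reduced graph Ĝ with vertex set {v_0, v_1, v_2, v_3} ∪ {v_{e_1}, v_{e_2}, v_{e_3}} ∪ {t_1, t_2, t_3} and edges {v_0, v_{e_i}}, {v_i, v_{e_i}}, {t_i, v_{e_i}} for i = 1, 2, 3, there exist reals y_a^j and d_a ≥ 0 (with d_a = 0 on {v_0, v_1, v_2, v_3, t_1, t_2, t_3}) satisfying y_{t_i}^i = 0, y_{t_i}^j ≥ 1 for j ≠ i, and y_a^j ≤ y_b^j + d_a and y_b^j ≤ y_a^j + d_b for every edge {a, b} of Ĝ and every color j, with d_{v_{e_1}} + d_{v_{e_2}} + d_{v_{e_3}} = 3/2. Hence on this instance the MinECC LP lower bound (which equals 2) is strictly larger than the Node-MC LP lower bound (which is at most 3/2). -/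
/-- **Strictly tighter LP instance (appendix).**
Let `H` be the edge-colored star with vertices `v₀, v₁, v₂, v₃` (modeled as `Fin 4`),
colors `{1, 2, 3}` (modeled as `Fin 3`), and unit-weight hyperedges
`e_i = {v₀, v_{i+1}}` of color `i`.  Then:
(a) every feasible MinECC LP solution for `H` has value `∑ i, xe i ≥ 2`; and
(b) the reduced Node-MC graph `Ĝ` (vertices `Fin 4 ⊕ Fin 3 ⊕ Fin 3`: original nodes,
hyperedge nodes `v_{e_i}`, terminals `t_i`; edges `{v₀, v_{e_i}}`, `{v_{i+1}, v_{e_i}}`,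
`{t_i, v_{e_i}}`) admits a feasible Node-MC LP solution `(y, d)` with `d = 0` on the
original nodes and terminals and `∑ i, d (v_{e_i}) = 3/2`. -/
theorem strictly_tighter_instance :
    (∀ (x : Fin 4 → Fin 3 → ℝ) (xe : Fin 3 → ℝ),
      (∀ v i, x v i ∈ Set.Icc (0 : ℝ) 1) →
      (∀ v, ∑ i, x v i = 2) →
      (∀ i, xe i ∈ Set.Icc (0 : ℝ) 1) →
      (∀ i : Fin 3, x 0 i ≤ xe i ∧ x i.succ i ≤ xe i) →
      2 ≤ ∑ i, xe i) ∧
    (∃ (y : Fin 4 ⊕ Fin 3 ⊕ Fin 3 → Fin 3 → ℝ) (d : Fin 4 ⊕ Fin 3 ⊕ Fin 3 → ℝ),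
      (∀ a, 0 ≤ d a) ∧
      (∀ v : Fin 4, d (Sum.inl v) = 0) ∧
      (∀ i : Fin 3, d (Sum.inr (Sum.inr i)) = 0) ∧
      (∀ i : Fin 3, y (Sum.inr (Sum.inr i)) i = 0) ∧
      (∀ i j : Fin 3, i ≠ j → 1 ≤ y (Sum.inr (Sum.inr i)) j) ∧
      (∀ i j : Fin 3,
        (y (Sum.inl 0) j ≤ y (Sum.inr (Sum.inl i)) j + d (Sum.inl 0)) ∧
        (y (Sum.inr (Sum.inl i)) j ≤ y (Sum.inl 0) j + d (Sum.inr (Sum.inl i))) ∧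
        (y (Sum.inl i.succ) j ≤ y (Sum.inr (Sum.inl i)) j + d (Sum.inl i.succ)) ∧
        (y (Sum.inr (Sum.inl i)) j ≤ y (Sum.inl i.succ) j + d (Sum.inr (Sum.inl i))) ∧
        (y (Sum.inr (Sum.inr i)) j ≤ y (Sum.inr (Sum.inl i)) j + d (Sum.inr (Sum.inr i))) ∧
        (y (Sum.inr (Sum.inl i)) j ≤ y (Sum.inr (Sum.inr i)) j + d (Sum.inr (Sum.inl i)))) ∧
      (∑ i, d (Sum.inr (Sum.inl i)) = 3 / 2)) := by
  constructor
  · intro x xe hx hsum hxe hc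
    calc (2:ℝ) = ∑ i, x 0 i := (hsum 0).symm
    _ ≤ ∑ i, xe i := Finset.sum_le_sum fun i _ => (hc i).1
  · refine ⟨fun a => match a with
      | Sum.inl _ => fun _ => 1/2
      | Sum.inr (Sum.inl i) => fun j => if j = i then 1/2 else 1
      | Sum.inr (Sum.inr i) => fun j => if j = i then 0 else 1,
      fun a => match a with
      | Sum.inr (Sum.inl _) => 1/2
      | _ => 0, ?_, ?_, ?_, ?_, ?_, ?_, ?_⟩
    · rintro (a | a | a) <;> norm_num
    · intro v; rfl
    · intro i; rfl
    · intro i; simp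
    · intro i j h; simp [Ne.symm h]
    · intro i j
      by_cases h : j = i <;> simp [h] <;> norm_num
    · simp [Fin.sum_univ_succ]; norm_num
end

section
/- (Observation from the appendix: exact reduction from MinECC to hypergraph multiway cut.) Let H = (V, E, C, ℓ) be an edge-colored hypergraph with color set C = {1, …, k} and nonnegative weights w_e. Form the hypergraph H′ on vertex set V ∪ {t_1, …, t_k} (the t_i being new terminal vertices) whose hyperedges are e′ = e ∪ {t_{ℓ(e)}} for e ∈ E, with weight w_e. Then for every assignment Z : V ∪ {t_1,…,t_k} → {1, …, k} with Z(t_i) = i for all i, the total weight of hyperedges e′ that are cut (i.e., contain two vertices a, b with Z(a) ≠ Z(b)) equals the MinECC cost of the node coloring Y = Z restricted to V. Consequently, the minimum hypergraph multiway cut value of H′ over all such assignments equals the minimum MinECC cost of H over all node colorings. -/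
open scoped Classical

/-- **Exact reduction from MinECC to hypergraph multiway cut (appendix observation).**
Given an edge-colored hypergraph `H = (V, E, Fin k, ℓ)` with nonnegative weights,
form the hypergraph `H'` on `V ⊕ Fin k` with hyperedges `e' = e ∪ {t_{ℓ(e)}}`.
For every terminal-respecting assignment `Z : V ⊕ Fin k → Fin k` (with `Z t_i = i`),
the total weight of cut hyperedges of `H'` equals the MinECC cost of the restriction
of `Z` to `V`; consequently the minimum hypergraph multiway cut value of `H'` equals
the minimum MinECC cost of `H`. -/
theorem minECC_to_hyperMC {V E : Type*} [Fintype V] [Fintype E] [DecidableEq V]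
    (k : ℕ) (edge : E → Finset V) (hne : ∀ e, (edge e).Nonempty)
    (ℓ : E → Fin k) (w : E → ℝ) (hw : ∀ e, 0 ≤ w e) :
    (∀ Z : V ⊕ Fin k → Fin k, (∀ i : Fin k, Z (Sum.inr i) = i) →
      ∑ e ∈ Finset.univ.filter (fun e : E =>
          ∃ a ∈ (edge e).image Sum.inl ∪ {Sum.inr (ℓ e)},
          ∃ b ∈ (edge e).image Sum.inl ∪ {Sum.inr (ℓ e)}, Z a ≠ Z b), w e =
      ∑ e ∈ Finset.univ.filter (fun e : E =>
          ∃ v ∈ edge e, Z (Sum.inl v) ≠ ℓ e), w e) ∧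
    sInf { t : ℝ | ∃ Z : V ⊕ Fin k → Fin k, (∀ i : Fin k, Z (Sum.inr i) = i) ∧
        t = ∑ e ∈ Finset.univ.filter (fun e : E =>
            ∃ a ∈ (edge e).image Sum.inl ∪ {Sum.inr (ℓ e)},
            ∃ b ∈ (edge e).image Sum.inl ∪ {Sum.inr (ℓ e)}, Z a ≠ Z b), w e } =
    sInf { t : ℝ | ∃ Y : V → Fin k,
        t = ∑ e ∈ Finset.univ.filter (fun e : E => ∃ v ∈ edge e, Y v ≠ ℓ e), w e } := by
  have key : ∀ Z : V ⊕ Fin k → Fin k, (∀ i : Fin k, Z (Sum.inr i) = i) →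
      ∀ e : E, ((∃ a ∈ (edge e).image Sum.inl ∪ {Sum.inr (ℓ e)},
          ∃ b ∈ (edge e).image Sum.inl ∪ {Sum.inr (ℓ e)}, Z a ≠ Z b) ↔
        ∃ v ∈ edge e, Z (Sum.inl v) ≠ ℓ e) := by
    intro Z hZ e
    constructor
    · rintro ⟨a, ha, b, hb, hab⟩
      simp only [Finset.mem_union, Finset.mem_image, Finset.mem_singleton] at ha hb
      rcases ha with ⟨v, hv, rfl⟩ | rfl
      · rcases hb with ⟨u, hu, rfl⟩ | rfl
        · by_cases h : Z (Sum.inl v) = ℓ e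
          · refine ⟨u, hu, fun h2 => hab ?_⟩
            rw [h, h2]
          · exact ⟨v, hv, h⟩
        · exact ⟨v, hv, fun h => hab (by rw [h, hZ])⟩
      · rcases hb with ⟨u, hu, rfl⟩ | rfl
        · exact ⟨u, hu, fun h => hab (by rw [h, hZ])⟩
        · exact absurd rfl hab
    · rintro ⟨v, hv, hne'⟩
      refine ⟨Sum.inl v, ?_, Sum.inr (ℓ e), ?_, ?_⟩
      · simp [hv]
      · simp
      · rw [hZ]; exact hne'
  have sums : ∀ Z : V ⊕ Fin k → Fin k, (∀ i : Fin k, Z (Sum.inr i) = i) →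
      ∑ e ∈ Finset.univ.filter (fun e : E =>
          ∃ a ∈ (edge e).image Sum.inl ∪ {Sum.inr (ℓ e)},
          ∃ b ∈ (edge e).image Sum.inl ∪ {Sum.inr (ℓ e)}, Z a ≠ Z b), w e =
      ∑ e ∈ Finset.univ.filter (fun e : E =>
          ∃ v ∈ edge e, Z (Sum.inl v) ≠ ℓ e), w e := by
    intro Z hZ
    apply Finset.sum_congr _ (fun _ _ => rfl)
    ext e
    simp only [Finset.mem_filter, key Z hZ e]
  refine ⟨sums, ?_⟩
  congr 1
  ext t
  constructor
  · rintro ⟨Z, hZ, rfl⟩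
    exact ⟨fun v => Z (Sum.inl v), by rw [sums Z hZ]⟩
  · rintro ⟨Y, rfl⟩
    refine ⟨Sum.elim Y id, fun i => rfl, ?_⟩
    rw [sums (Sum.elim Y id) (fun i => rfl)]
    rfl
end

section
/- (Matching lower bound underlying MatchColoring's 2-approximation guarantee.) Let H = (V, E, C, ℓ) be an unweighted edge-colored hypergraph, and call (e, f) a bad edge pair if e ∩ f ≠ ∅ and ℓ(e) ≠ ℓ(f). Suppose M is a collection of bad edge pairs that are pairwise hyperedge-disjoint (no hyperedge of E belongs to two pairs of M). Then every node coloring Y : V → C makes a mistake at (fails to satisfy) at least |M| hyperedges; i.e., the optimal unweighted MinECC objective is at least |M|. -/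
open scoped Classical

theorem mistake_or_mistake_of_bad_pair {V E C : Type*} (edge : E → Finset V) (ℓ : E → C)
    (Y : V → C) {e f : E} (hef : (edge e ∩ edge f).Nonempty) (hℓ : ℓ e ≠ ℓ f) :
    (∃ v ∈ edge e, Y v ≠ ℓ e) ∨ ∃ v ∈ edge f, Y v ≠ ℓ f := by
  obtain ⟨v, hv⟩ := hef
  rw [Finset.mem_inter] at hv
  by_contra! h
  exact hℓ ((h.1 v hv.1).symm.trans (h.2 v hv.2))

/-- Choosing from each pair a member lying in `S` is injective because the pairs are disjoint. -/
theorem Finset.card_le_card_of_disjoint_pairs_meeting {E : Type*} (M : Finset (E × E))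
    (S : Finset E) (hmeet : ∀ p ∈ M, p.1 ∈ S ∨ p.2 ∈ S)
    (hdisj : ∀ p ∈ M, ∀ q ∈ M, p ≠ q →
      p.1 ≠ q.1 ∧ p.1 ≠ q.2 ∧ p.2 ≠ q.1 ∧ p.2 ≠ q.2) :
    M.card ≤ S.card := by
  let pick : E × E → E := fun p => if p.1 ∈ S then p.1 else p.2
  refine Finset.card_le_card_of_injOn pick (fun p hp => ?_) (fun p hp q hq hpq => ?_)
  · simp only [Finset.mem_coe, pick]
    split_ifs with h1
    exacts [h1, (hmeet p hp).resolve_left h1]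
  · by_contra hne
    obtain ⟨h11, h12, h21, h22⟩ := hdisj p hp q hq hne
    simp only [pick] at hpq
    split_ifs at hpq <;> contradiction

theorem matching_lower_bound_general {V E C : Type*} [Fintype E]
    (edge : E → Finset V) (ℓ : E → C)
    (M : Finset (E × E))
    (hbad : ∀ p ∈ M, (edge p.1 ∩ edge p.2).Nonempty ∧ ℓ p.1 ≠ ℓ p.2)
    (hdisj : ∀ p ∈ M, ∀ q ∈ M, p ≠ q →
      p.1 ≠ q.1 ∧ p.1 ≠ q.2 ∧ p.2 ≠ q.1 ∧ p.2 ≠ q.2)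
    (Y : V → C) :
    M.card ≤ (Finset.univ.filter (fun e : E => ∃ v ∈ edge e, Y v ≠ ℓ e)).card := by
  refine Finset.card_le_card_of_disjoint_pairs_meeting M _ (fun p hp => ?_) hdisj
  simpa only [Finset.mem_filter, Finset.mem_univ, true_and] using
    mistake_or_mistake_of_bad_pair edge ℓ Y (hbad p hp).1 (hbad p hp).2

/-- **Matching lower bound underlying MatchColoring's 2-approximation guarantee.**
Let `H = (V, E, C, ℓ)` be an unweighted edge-colored hypergraph, and call `(e, f)` a
bad edge pair if `e ∩ f ≠ ∅` and `ℓ(e) ≠ ℓ(f)`.  If `M` is a collection of bad edge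
pairs that are pairwise hyperedge-disjoint, then every node coloring `Y : V → C`
makes a mistake at least `|M|` hyperedges. -/
theorem matching_lower_bound {V E C : Type*} [Fintype V] [Fintype E] [Fintype C]
    (edge : E → Finset V) (hne : ∀ e, (edge e).Nonempty) (ℓ : E → C)
    (M : Finset (E × E))
    (hbad : ∀ p ∈ M, (edge p.1 ∩ edge p.2).Nonempty ∧ ℓ p.1 ≠ ℓ p.2)
    (hdisj : ∀ p ∈ M, ∀ q ∈ M, p ≠ q →
      p.1 ≠ q.1 ∧ p.1 ≠ q.2 ∧ p.2 ≠ q.1 ∧ p.2 ≠ q.2)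
    (Y : V → C) :
    M.card ≤ (Finset.univ.filter (fun e : E => ∃ v ∈ edge e, Y v ≠ ℓ e)).card :=
  matching_lower_bound_general edge ℓ M hbad hdisj Y
end

section
/- (Rank-based lower bound (equation (10)) underlying MajorityVote's a posteriori guarantee.) Let H = (V, E, C, ℓ) be an edge-colored hypergraph of rank r (every hyperedge has at most r vertices, r ≥ 1) with nonnegative weights w_e. Then for every node coloring Y : V → C, the MinECC cost of Y is at least (1/r)·∑_{e∈E} w_e·|{ v ∈ e : Y(v) ≠ ℓ(e) }|. Consequently, the minimum MinECC cost over all node colorings is at least (1/r)·min_{Y} ∑_{e∈E} w_e·|{ v ∈ e : Y(v) ≠ ℓ(e) }|. -/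
open scoped Classical

/-- **Rank-based lower bound (equation (10)) underlying MajorityVote's guarantee.**
Let `H = (V, E, C, ℓ)` be an edge-colored hypergraph of rank `r ≥ 1` with
nonnegative weights.  For every node coloring `Y`, the MinECC cost of `Y` is at least
`(1/r) · ∑_e w_e · |{v ∈ e : Y v ≠ ℓ e}|`; consequently the minimum MinECC cost is
at least `(1/r)` times the minimum of `∑_e w_e · |{v ∈ e : Y v ≠ ℓ e}|`. -/
theorem rank_lower_bound {V E C : Type*} [Fintype V] [Fintype E] [Fintype C]
    [Nonempty C] (edge : E → Finset V) (hne : ∀ e, (edge e).Nonempty) (ℓ : E → C)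
    (w : E → ℝ) (hw : ∀ e, 0 ≤ w e)
    (r : ℕ) (hr : 1 ≤ r) (hrank : ∀ e, (edge e).card ≤ r) :
    (∀ Y : V → C,
      (1 / (r : ℝ)) * ∑ e, w e * (((edge e).filter (fun v => Y v ≠ ℓ e)).card : ℝ) ≤
        ∑ e ∈ Finset.univ.filter (fun e : E => ∃ v ∈ edge e, Y v ≠ ℓ e), w e) ∧
    (1 / (r : ℝ)) * sInf { t : ℝ | ∃ Y : V → C,
        t = ∑ e, w e * (((edge e).filter (fun v => Y v ≠ ℓ e)).card : ℝ) } ≤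
      sInf { t : ℝ | ∃ Y : V → C,
        t = ∑ e ∈ Finset.univ.filter (fun e : E => ∃ v ∈ edge e, Y v ≠ ℓ e), w e } := by
  have hrpos : (0:ℝ) < r := by exact_mod_cast hr
  set f : (V → C) → ℝ :=
    fun Y => ∑ e, w e * (((edge e).filter (fun v => Y v ≠ ℓ e)).card : ℝ) with hf
  set g : (V → C) → ℝ :=
    fun Y => ∑ e ∈ Finset.univ.filter (fun e : E => ∃ v ∈ edge e, Y v ≠ ℓ e), w e with hg
  have key : ∀ Y, (1 / (r : ℝ)) * f Y ≤ g Y := by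
    intro Y
    rw [one_div, inv_mul_le_iff₀ hrpos]
    have h1 : f Y = ∑ e ∈ Finset.univ.filter (fun e : E => ∃ v ∈ edge e, Y v ≠ ℓ e),
        w e * (((edge e).filter (fun v => Y v ≠ ℓ e)).card : ℝ) := by
      rw [hf]
      refine (Finset.sum_filter_of_ne ?_).symm
      intro e _ hne'
      by_contra h
      simp only [not_exists, not_and, not_not] at h
      apply hne'
      have : (edge e).filter (fun v => Y v ≠ ℓ e) = ∅ := by
        apply Finset.filter_eq_empty_iff.2
        intro v hv
        simp [h v hv]
      simp [this]
    rw [h1, hg, Finset.mul_sum]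
    apply Finset.sum_le_sum
    intro e _
    have hc : (((edge e).filter (fun v => Y v ≠ ℓ e)).card : ℝ) ≤ (r : ℝ) := by
      exact_mod_cast le_trans (Finset.card_filter_le _ _) (hrank e)
    calc w e * (((edge e).filter (fun v => Y v ≠ ℓ e)).card : ℝ)
        ≤ w e * r := by exact mul_le_mul_of_nonneg_left hc (hw e)
      _ = r * w e := by ring
  refine ⟨key, ?_⟩
  have hS1 : { t : ℝ | ∃ Y : V → C, t = f Y } = Set.range f := by
    ext t; simp [eq_comm]
  have hS2 : { t : ℝ | ∃ Y : V → C, t = g Y } = Set.range g := by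
    ext t; simp [eq_comm]
  rw [hS1, hS2]
  have hfin1 : (Set.range f).Finite := Set.finite_range f
  have hfin2 : (Set.range g).Finite := Set.finite_range g
  have hmem := (Set.range_nonempty g).csInf_mem hfin2
  obtain ⟨Y0, hY0⟩ := hmem
  calc (1 / (r : ℝ)) * sInf (Set.range f)
      ≤ (1 / (r : ℝ)) * f Y0 := by
        apply mul_le_mul_of_nonneg_left _ (by positivity)
        exact csInf_le hfin1.bddBelow (Set.mem_range_self Y0)
    _ ≤ g Y0 := key Y0
    _ = sInf (Set.range g) := hY0
end
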